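/- Let T be a DFS tree of a connected graph G and let u be a proper descendant of v with M(u) = M(v). Then B(v) ⊆ B(u). If moreover G is 3-edge-connected, then the inclusion is strict: B(v) ⊊ B(u). -/

import Mathlib

variable {V E : Type}

/-- Reachability in the multigraph with edge-endpoint map `ends`,
avoiding (i.e. after deleting) the edges in `S`. -/
def Reach (ends : E → V × V) (S : Set E) : V → V → Prop :=
  Relation.ReflTransGen (fun a b => ∃ e, e ∉ S ∧ (ends e = (a, b) ∨ ends e = (b, a)))

/-- The multigraph is connected. -/
def Connected (ends : E → V × V) : Prop := ∀ u v : V, Reach ends ∅ u v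

/-- `u` and `v` are `k`-edge-connected: no set of at most `k - 1` edges separates them. -/
def KConn (ends : E → V × V) (k : ℕ) (u v : V) : Prop :=
  ∀ S : Finset E, S.card ≤ k - 1 → Reach ends (↑S) u v

/-- The multigraph is `k`-edge-connected: no edge cut of size less than `k`. -/
def GraphKConn (ends : E → V × V) (k : ℕ) : Prop :=
  ∀ S : Finset E, S.card < k → ∀ u v : V, Reach ends (↑S) u v

/-- `S` is an edge cut: removing it disconnects the graph. -/
def IsCutSet (ends : E → V × V) (S : Set E) : Prop :=
  ∃ u v : V, ¬ Reach ends S u v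

/-- A (candidate) DFS tree on the multigraph `ends : E → V × V`: a root, a parent
function, a choice of a tree edge for each non-root vertex, and a preorder numbering. -/
structure DFSTree (V E : Type) where
  ends : E → V × V
  root : V
  parent : V → V
  treeEdge : V → E
  pre : V → ℕ

namespace DFSTree

variable (t : DFSTree V E)

/-- `t.Anc a b` : `a` is an ancestor of `b` (every vertex is an ancestor of itself). -/
def Anc (a b : V) : Prop :=
  Relation.ReflTransGen (fun x y => x ≠ t.root ∧ y = t.parent x) b a

/-- `a` is a proper ancestor of `b`. -/
def ProperAnc (a b : V) : Prop := t.Anc a b ∧ a ≠ b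

def IsTreeEdge (e : E) : Prop := ∃ v, v ≠ t.root ∧ e = t.treeEdge v

/-- The set `B(v)`: back-edges `(x, y)` with `x` a descendant of `v` and `y` a
proper ancestor of `v`. -/
def B (v : V) : Set E :=
  {e | ¬ t.IsTreeEdge e ∧ t.Anc v (t.ends e).1 ∧ t.ProperAnc (t.ends e).2 v}

/-- `m` is the nearest common ancestor of the set `S` of vertices. -/
def IsNCA (S : Set V) (m : V) : Prop :=
  (∀ x ∈ S, t.Anc m x) ∧ ∀ m' : V, (∀ x ∈ S, t.Anc m' x) → t.Anc m' m

/-- `m = M(v)`: the nearest common ancestor of all lower ends of back-edges in `B(v)`. -/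
def IsM (v m : V) : Prop := t.IsNCA {x | ∃ e ∈ t.B v, (t.ends e).1 = x} m

/-- `h = high(v)`: the highest (in preorder) upper end of a back-edge in `B(v)`. -/
def IsHigh (v h : V) : Prop :=
  (∃ e ∈ t.B v, (t.ends e).2 = h) ∧ ∀ e ∈ t.B v, t.pre (t.ends e).2 ≤ t.pre h

/-- `l = low(v)`: the lowest (in preorder) upper end of a back-edge in `B(v)`. -/
def IsLow (v l : V) : Prop :=
  (∃ e ∈ t.B v, (t.ends e).2 = l) ∧ ∀ e ∈ t.B v, t.pre l ≤ t.pre (t.ends e).2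

/-- `v` and `w` have the same `M`-value. -/
def SameM (v w : V) : Prop := ∃ m, t.IsM v m ∧ t.IsM w m

/-- `n = nextM(v)`: the greatest vertex smaller than `v` with the same `M`-value. -/
def IsNextM (v n : V) : Prop :=
  t.pre n < t.pre v ∧ t.SameM v n ∧
    ∀ z, t.pre z < t.pre v → t.SameM v z → t.pre z ≤ t.pre n

/-- `l = lastM(v)`: the smallest vertex with the same `M`-value as `v`. -/
def IsLastM (v l : V) : Prop :=
  t.SameM v l ∧ ∀ z, t.SameM v z → t.pre l ≤ t.pre z

/-- `t` really is a DFS spanning tree of the connected multigraph `ends`. -/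
structure IsDFS : Prop where
  conn : Connected t.ends
  parent_root : t.parent t.root = t.root
  tree_ends : ∀ v, v ≠ t.root → t.ends (t.treeEdge v) = (v, t.parent v)
  treeEdge_inj : ∀ v w, v ≠ t.root → w ≠ t.root → t.treeEdge v = t.treeEdge w → v = w
  back : ∀ e, ¬ t.IsTreeEdge e → t.Anc (t.ends e).2 (t.ends e).1
  pre_inj : Function.Injective t.pre
  pre_mono : ∀ a b, t.Anc a b → t.pre a ≤ t.pre b
  pre_interval : ∀ a b : V,
    t.pre a ≤ t.pre b → t.pre b < t.pre a + {x | t.Anc a x}.ncard → t.Anc a b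

end DFSTree

/-!
Every back-edge of `B(v)` has its lower end below `M(v) = M(u)`, a descendant of `u`, so it
lies in `B(u)` as well. If `B(v) = B(u)` with `v` a proper ancestor of `u`, a back-edge with
exactly one end among the descendants of `v` that are not descendants of `u` would lie in
exactly one of `B(v)` and `B(u)`; so the tree edges above `u` and `v` alone separate that set
from `u`, which a 3-edge-connected graph does not allow.
-/

namespace DFSTree

variable {t : DFSTree V E} {a b c u v w : V}

lemma Anc.refl : t.Anc a a := Relation.ReflTransGen.refl

lemma Anc.trans (hab : t.Anc a b) (hbc : t.Anc b c) : t.Anc a c :=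
  Relation.ReflTransGen.trans hbc hab

lemma anc_antisymm (ht : t.IsDFS) (hab : t.Anc a b) (hba : t.Anc b a) : a = b :=
  ht.pre_inj ((ht.pre_mono _ _ hab).antisymm (ht.pre_mono _ _ hba))

lemma anc_parent (hw : w ≠ t.root) : t.Anc (t.parent w) w :=
  Relation.ReflTransGen.single ⟨hw, rfl⟩

lemma anc_parent_iff (hw : w ≠ t.root) (haw : a ≠ w) : t.Anc a (t.parent w) ↔ t.Anc a w := by
  refine ⟨fun h => h.trans (anc_parent hw), fun h => ?_⟩
  rcases h.cases_head with rfl | ⟨d, ⟨_, rfl⟩, hd⟩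
  · exact absurd rfl haw
  · exact hd

lemma anc_total_of_anc (ha : t.Anc a c) (hb : t.Anc b c) : t.Anc a b ∨ t.Anc b a := by
  induction ha with
  | refl => exact Or.inr hb
  | @tail d _ _ hstep ih =>
    obtain ⟨hd, rfl⟩ := hstep
    rcases ih with hdb | hbd
    · exact Or.inl ((anc_parent hd).trans hdb)
    · by_cases hbd' : b = d
      · subst hbd'
        exact Or.inl (anc_parent hd)
      · exact Or.inr ((anc_parent_iff hd hbd').2 hbd)

lemma anc_of_isM {m : V} (hM : t.IsM w m) : t.Anc w m :=
  hM.2 w fun _ ⟨_, he, hx⟩ => hx ▸ he.2.1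

lemma mem_B_iff (ht : t.IsDFS) {e : E} (he : ¬ t.IsTreeEdge e) :
    e ∈ t.B w ↔ t.Anc w (t.ends e).1 ∧ ¬ t.Anc w (t.ends e).2 := by
  have hback := ht.back e he
  refine ⟨fun ⟨_, hx, hy, hne⟩ => ⟨hx, fun hwy => hne (anc_antisymm ht hy hwy)⟩,
    fun ⟨hx, hy⟩ => ⟨he, hx, ?_, fun h => hy (h ▸ Anc.refl)⟩⟩
  exact (anc_total_of_anc hx hback).resolve_left hy

lemma B_subset_B_of_properAnc (ht : t.IsDFS) (hvu : t.ProperAnc v u)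
    (hlow : ∀ e ∈ t.B v, t.Anc u (t.ends e).1) : t.B v ⊆ t.B u := by
  intro e he
  refine ⟨he.1, hlow e he, he.2.2.1.trans hvu.1, fun hyu => hvu.2 ?_⟩
  exact anc_antisymm ht hvu.1 (hyu ▸ he.2.2.1)

lemma sep_iff_of_B_eq (ht : t.IsDFS) (hvu : t.Anc v u) (hB : t.B v = t.B u) {e : E}
    (he : e ∉ ({t.treeEdge u, t.treeEdge v} : Set E)) :
    (t.Anc v (t.ends e).1 ∧ ¬ t.Anc u (t.ends e).1) ↔
      (t.Anc v (t.ends e).2 ∧ ¬ t.Anc u (t.ends e).2) := by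
  by_cases htree : t.IsTreeEdge e
  · obtain ⟨w, hw, rfl⟩ := htree
    have huw : u ≠ w := by rintro rfl; exact he (Or.inl rfl)
    have hvw : v ≠ w := by rintro rfl; exact he (Or.inr rfl)
    rw [ht.tree_ends w hw, anc_parent_iff hw huw, anc_parent_iff hw hvw]
  · have hBe := congrArg (e ∈ ·) hB
    simp only [mem_B_iff ht htree, eq_iff_iff] at hBe
    have hyx := ht.back e htree
    have hx_of_u : t.Anc u (t.ends e).1 → t.Anc v (t.ends e).1 := hvu.trans
    have hy_of_u : t.Anc u (t.ends e).2 → t.Anc v (t.ends e).2 := hvu.trans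
    have hv_back : t.Anc v (t.ends e).2 → t.Anc v (t.ends e).1 := (·.trans hyx)
    have hu_back : t.Anc u (t.ends e).2 → t.Anc u (t.ends e).1 := (·.trans hyx)
    tauto

lemma reach_of_forall_iff {ends : E → V × V} {S : Set E} {P : V → Prop}
    (hP : ∀ e ∉ S, P (ends e).1 ↔ P (ends e).2) {a b : V} (hab : Reach ends S a b)
    (ha : P a) : P b := by
  induction hab with
  | refl => exact ha
  | tail _ hstep ih =>
    obtain ⟨e, he, hends | hends⟩ := hstep <;> have hPe := hP e he <;> rw [hends] at hPe
    exacts [hPe.1 ih, hPe.2 ih]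

theorem eq_of_B_eq (ht : t.IsDFS) (h3 : GraphKConn t.ends 3) (hvu : t.Anc v u)
    (hB : t.B v = t.B u) : v = u := by
  classical
  by_contra hne
  have hcut : ({t.treeEdge u, t.treeEdge v} : Finset E).card < 3 :=
    Finset.card_le_two.trans_lt (by norm_num)
  have hsep := reach_of_forall_iff (P := fun z => t.Anc v z ∧ ¬ t.Anc u z)
    (fun e he => sep_iff_of_B_eq ht hvu hB (by simpa using he)) (h3 _ hcut v u)
    ⟨Anc.refl, fun huv => hne (anc_antisymm ht hvu huv)⟩
  exact hsep.2 Anc.refl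

end DFSTree

/-- If `u` is a proper descendant of `v` with `M(u) = M(v)` then `B(v) ⊆ B(u)`;
if moreover the graph is 3-edge-connected, the inclusion is strict. -/
theorem B_ssubset_of_proper_descendant_same_M (t : DFSTree V E) (ht : t.IsDFS)
    (u v m : V) (h : t.ProperAnc v u) (hMu : t.IsM u m) (hMv : t.IsM v m) :
    t.B v ⊆ t.B u ∧ (GraphKConn t.ends 3 → t.B v ⊂ t.B u) := by
  have hlow (e : E) (he : e ∈ t.B v) : t.Anc u (t.ends e).1 :=
    (DFSTree.anc_of_isM hMu).trans (hMv.1 _ ⟨e, he, rfl⟩)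
  have hsub : t.B v ⊆ t.B u := DFSTree.B_subset_B_of_properAnc ht h hlow
  exact ⟨hsub, fun h3 => hsub.ssubset_of_ne fun hB => h.2 (DFSTree.eq_of_B_eq ht h3 h.1 hB)⟩
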